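/- Suppose p ∈ S^k(g)^g for some k ≥ 1, i.e. p is a degree-k element of S(g) invariant under the adjoint action of g. Then p_γ ∈ S^k(g⊗A)^{g⊗A} for every γ ∉ −Φ_k = ⋃_{j=1}^{k} ( ((Ω₁−Ω₁)\Ω₁)^j + Ω₁^{k−j} ); that is, every such component p_γ is invariant under the adjoint action of g⊗A on S(g⊗A). -/

import Mathlib

/-!
`τ_a(p)` is homogeneous of degree `k`, hence so is each of its `ℤ^ℓ`-components `p_γ`.
The action of `x ⊗ τ^ω` is a derivation raising the `ℤ^ℓ`-degree by `ω`, so it sends `p_γ` to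
the `(γ + ω)`-component of `(x ⊗ τ^ω) · τ_a(p)`. By the chain rule and the `g`-invariance of `p`,
this element is `-∑ⱼ τ_a(∂ⱼ p) · Eⱼ`, where `Eⱼ` collects the terms `y ⊗ τ^μ` of `τ_a(⁅x, bⱼ⁆)`
with `μ ∈ Ω₁ \ (ω + Ω₁)`, the only ones the shift by `ω` does not reach. Its monomials have
degrees in `Ω₁^{k-1} + μ`, and `γ + ω` of that form would put `γ` in
`((Ω₁ - Ω₁) \ Ω₁) + Ω₁^{k-1}`, the `j = 1` part of `-Φ_k`.
-/

open MvPolynomial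

/-- Coercion of a multi-exponent in `ℕ^ℓ` to `ℤ^ℓ`. -/
def zc {ℓ : ℕ} (ω : Fin ℓ → ℕ) : Fin ℓ → ℤ := fun k => (ω k : ℤ)

/-- The sum of two subsets of an additive monoid. -/
def setAdd {M : Type*} [Add M] (S T : Set M) : Set M := {x | ∃ a ∈ S, ∃ b ∈ T, x = a + b}

/-- The `j`-fold sumset `S^j` of a subset `S` of an additive monoid (with `S^0 = {0}`). -/
def nfoldSum {M : Type*} [AddMonoid M] (S : Set M) : ℕ → Set M
  | 0 => {0}
  | n + 1 => setAdd S (nfoldSum S n)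

/-- The extension of the assignment `X j ↦ v j` on variables to a derivation of the
polynomial ring: `p ↦ ∑ j, v j * ∂p/∂X j`. -/
noncomputable def extDer {R : Type*} [CommSemiring R] {σ : Type*} [Fintype σ]
    (v : σ → MvPolynomial σ R) (p : MvPolynomial σ R) : MvPolynomial σ R :=
  ∑ j, v j * pderiv j p

/-- The adjoint action of `x ∈ g` on `S(g) = MvPolynomial ι F` (variables indexed by the
basis `bg` of `g`), described by its values on variables: `x · bg j = ⁅x, bg j⁆`,
expanded in the basis. -/
noncomputable def vAd {F : Type*} [Field F] {g : Type*} [LieRing g] [LieAlgebra F g]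
    {ι : Type*} [Fintype ι] (bg : Module.Basis ι F g) (x : g) : ι → MvPolynomial ι F :=
  fun j => ∑ m, (bg.repr ⁅x, bg j⁆ m) • X m

/-- The adjoint action of `X = ∑_{ω ∈ Ω₁} xc ω ⊗ τ^ω ∈ g ⊗ A` on
`S(g ⊗ A) = MvPolynomial (ι × Ω₁) F` (the variable `X (j, λ)` corresponding to
`bg j ⊗ τ^λ`), described by its values on variables:
`X · (bg j ⊗ τ^λ) = ∑_ω ⁅xc ω, bg j⁆ ⊗ τ^{ω+λ}`, where `τ^{ω+λ} = 0` if `ω + λ ∉ Ω₁`. -/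
noncomputable def vAdA {F : Type*} [Field F] {ℓ : ℕ} (Ω₁ : Finset (Fin ℓ → ℕ))
    {g : Type*} [LieRing g] [LieAlgebra F g] {ι : Type*} [Fintype ι] (bg : Module.Basis ι F g)
    (xc : ↥Ω₁ → g) : ι × ↥Ω₁ → MvPolynomial (ι × ↥Ω₁) F :=
  fun z => ∑ ω : ↥Ω₁,
    if h : ((ω : Fin ℓ → ℕ) + (z.2 : Fin ℓ → ℕ) ∈ Ω₁)
    then ∑ m, (bg.repr ⁅xc ω, bg z.1⁆ m) •
      X (m, (⟨(ω : Fin ℓ → ℕ) + (z.2 : Fin ℓ → ℕ), h⟩ : ↥Ω₁))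
    else 0

/-- The algebra homomorphism `τ_a : S(g) → S(g ⊗ A)` induced by `x ↦ x ⊗ a` where
`a = ∑_{ω ∈ Ω₁} τ^ω`. -/
noncomputable def tauA (F : Type*) [Field F] {ℓ : ℕ} (Ω₁ : Finset (Fin ℓ → ℕ))
    (ι : Type*) : MvPolynomial ι F →ₐ[F] MvPolynomial (ι × ↥Ω₁) F :=
  aeval (fun i => ∑ ω : ↥Ω₁, X (i, ω))

/-- `pComp F Ω₁ p γ` is the component `p_γ` of `τ_a(p)` of degree `γ ∈ ℤ^ℓ` with respect
to the `ℤ^ℓ`-grading of `S(g ⊗ A)` in which `X (i, ω)` has degree `ω`. -/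
noncomputable def pComp (F : Type*) [Field F] {ℓ : ℕ} (Ω₁ : Finset (Fin ℓ → ℕ))
    {ι : Type*} (p : MvPolynomial ι F) (γ : Fin ℓ → ℤ) : MvPolynomial (ι × ↥Ω₁) F :=
  weightedHomogeneousComponent (fun z : ι × ↥Ω₁ => zc (z.2 : Fin ℓ → ℕ)) γ (tauA F Ω₁ ι p)

open Pointwise

section Derivation

variable {R : Type*} [CommSemiring R] {σ : Type*} [Fintype σ]

theorem Derivation.map_aeval_mvPolynomial {A M : Type*} [CommSemiring A] [Algebra R A]
    [AddCommMonoid M] [Module A M] [Module R M] [IsScalarTower R A M]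
    (D : Derivation R A M) (f : σ → A) (q : MvPolynomial σ R) :
    D (aeval f q) = ∑ j, aeval f (pderiv j q) • D (f j) := by
  classical
  induction q using MvPolynomial.induction_on with
  | C r => simp
  | add q₁ q₂ h₁ h₂ => simp only [map_add, h₁, h₂, add_smul, Finset.sum_add_distrib]
  | mul_X q i ih =>
    simp [Derivation.leibniz, ih, pderiv_X, Pi.single_apply, add_smul,
      Finset.sum_add_distrib, Finset.smul_sum, smul_smul, mul_comm, add_comm,
      apply_ite (aeval f), ite_smul]

theorem extDer_eq_mkDerivation (v : σ → MvPolynomial σ R) : extDer v = mkDerivation R v := by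
  funext p
  conv_rhs => rw [← aeval_X_left_apply p, Derivation.map_aeval_mvPolynomial]
  simp [extDer, mul_comm]

theorem extDer_sum {α : Type*} (s : Finset α) (v : α → σ → MvPolynomial σ R)
    (p : MvPolynomial σ R) : extDer (∑ a ∈ s, v a) p = ∑ a ∈ s, extDer (v a) p := by
  simp only [extDer, Finset.sum_apply, Finset.sum_mul]
  exact Finset.sum_comm

end Derivation

theorem extDer_algHom_of_extDer_eq_zero {R σ ι : Type*} [CommRing R] [Fintype σ] [Fintype ι]
    {u : ι → MvPolynomial ι R} {p : MvPolynomial ι R} (hp : extDer u p = 0)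
    (φ : MvPolynomial ι R →ₐ[R] MvPolynomial σ R) (v : σ → MvPolynomial σ R) :
    extDer v (φ p) = ∑ j, φ (pderiv j p) * (extDer v (φ (X j)) - φ (u j)) := by
  have hφp : ∑ j, φ (pderiv j p) * φ (u j) = 0 := by
    simpa [extDer, mul_comm] using congrArg φ hp
  conv_lhs => rw [aeval_unique φ, extDer_eq_mkDerivation, Derivation.map_aeval_mvPolynomial,
    ← aeval_unique φ]
  simp [extDer_eq_mkDerivation, mul_sub, hφp]

namespace MvPolynomial

variable {R : Type*} [CommSemiring R] {σ : Type*} {M : Type*}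

protected theorem IsWeightedHomogeneous.extDer [AddCommGroup M] [Fintype σ] {w : σ → M}
    {v : σ → MvPolynomial σ R} {c : M} (hv : ∀ z, (v z).IsWeightedHomogeneous w (w z + c))
    {φ : MvPolynomial σ R} {δ : M} (hφ : φ.IsWeightedHomogeneous w δ) :
    (extDer v φ).IsWeightedHomogeneous w (δ + c) := by
  rw [← mem_weightedHomogeneousSubmodule, extDer]
  refine Submodule.sum_mem _ fun z _ => ?_
  rw [mem_weightedHomogeneousSubmodule, show δ + c = w z + c + (δ - w z) by abel]
  exact (hv z).mul (hφ.pderiv (sub_add_cancel δ (w z)))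

theorem extDer_weightedHomogeneousComponent [AddCommGroup M] [Fintype σ] {w : σ → M}
    {v : σ → MvPolynomial σ R} {c : M} (hv : ∀ z, (v z).IsWeightedHomogeneous w (w z + c))
    (δ : M) (φ : MvPolynomial σ R) :
    extDer v (weightedHomogeneousComponent w δ φ)
      = weightedHomogeneousComponent w (δ + c) (extDer v φ) := by
  rw [extDer_eq_mkDerivation]
  induction φ using MvPolynomial.induction_on' with
  | add p q hp hq => simp only [map_add, hp, hq]
  | monomial u a =>
    have hm : (monomial u a).IsWeightedHomogeneous w (Finsupp.weight w u) :=
      isWeightedHomogeneous_monomial _ _ _ rfl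
    have hDm := hm.extDer hv
    rw [extDer_eq_mkDerivation] at hDm
    by_cases hδ : δ = Finsupp.weight w u
    · rw [hδ, hm.weightedHomogeneousComponent_same, hDm.weightedHomogeneousComponent_same]
    · rw [hm.weightedHomogeneousComponent_ne δ hδ, map_zero,
        hDm.weightedHomogeneousComponent_ne _ (fun h => hδ (add_right_cancel h))]

theorem IsHomogeneous.weightedHomogeneousComponent [AddCommMonoid M] {φ : MvPolynomial σ R}
    {n : ℕ} (hφ : φ.IsHomogeneous n) (w : σ → M) (δ : M) :
    (weightedHomogeneousComponent w δ φ).IsHomogeneous n := by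
  classical
  intro d hd
  rw [coeff_weightedHomogeneousComponent] at hd
  split_ifs at hd
  exacts [hφ hd, absurd rfl hd]

theorem weightedHomogeneousComponent_mul_X_eq_zero [AddCommMonoid M] {w : σ → M}
    {φ : MvPolynomial σ R} {z : σ} {δ : M}
    (h : ∀ d ∈ φ.support, Finsupp.weight w d + w z ≠ δ) :
    weightedHomogeneousComponent w δ (φ * X z) = 0 := by
  classical
  refine weightedHomogeneousComponent_eq_zero' _ _ fun d hd => ?_
  obtain ⟨e, he, rfl⟩ := Finset.mem_map.1 ((support_mul_X z φ) ▸ hd)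
  simpa [Finsupp.weight_single] using h e he

end MvPolynomial

theorem Finsupp.weight_mem_nsmul {σ M : Type*} [AddCommMonoid M] {w : σ → M} {S : Set M}
    (hw : ∀ z, w z ∈ S) (d : σ →₀ ℕ) : weight w d ∈ d.degree • S := by
  induction d using Finsupp.induction with
  | zero => simp
  | single_add z n d _ _ ih =>
    rw [map_add, map_add, add_nsmul, weight_single, degree_single]
    exact Set.add_mem_add (Set.nsmul_mem_nsmul (hw z)) ih

theorem setAdd_eq_add {M : Type*} [Add M] (S T : Set M) : setAdd S T = S + T := by
  ext x
  simp [setAdd, Set.mem_add, eq_comm]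

theorem nfoldSum_eq_nsmul {M : Type*} [AddMonoid M] (S : Set M) (n : ℕ) :
    nfoldSum S n = n • S := by
  induction n with
  | zero => rfl
  | succ n ih => rw [nfoldSum, ih, setAdd_eq_add, succ_nsmul']

section CurrentAlgebra

variable {F : Type*} [Field F] {ℓ : ℕ} (Ω₁ : Finset (Fin ℓ → ℕ)) {ι : Type*}

theorem zc_add (a b : Fin ℓ → ℕ) : zc (a + b) = zc a + zc b := by
  funext i
  simp [zc]

theorem zc_injective : Function.Injective (zc (ℓ := ℓ)) :=
  fun _ _ h => funext fun i => by simpa [zc] using congrFun h i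

def zcSet : Set (Fin ℓ → ℤ) := {δ | ∃ β ∈ Ω₁, δ = zc β}

def zcDiffSet : Set (Fin ℓ → ℤ) :=
  {δ | (∃ α ∈ Ω₁, ∃ β ∈ Ω₁, δ = zc α - zc β) ∧ ¬(∃ β ∈ Ω₁, δ = zc β)}

def outsideShift (ω : Fin ℓ → ℕ) : Finset (Fin ℓ → ℕ) := Ω₁ \ Ω₁.image (ω + ·)

theorem zc_sub_mem_zcDiffSet {ω μ : Fin ℓ → ℕ} (hω : ω ∈ Ω₁) (hμ : μ ∈ outsideShift Ω₁ ω) :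
    zc μ - zc ω ∈ zcDiffSet Ω₁ := by
  obtain ⟨hμ, hμω⟩ := Finset.mem_sdiff.1 hμ
  refine ⟨⟨μ, hμ, ω, hω, rfl⟩, ?_⟩
  rintro ⟨β, hβ, h⟩
  exact hμω (Finset.mem_image.2 ⟨β, hβ, zc_injective (by rw [zc_add, ← h]; abel)⟩)

variable (F) in
/-- The variable `bg m ⊗ τ^μ` of `S(g ⊗ A)`; it is `0` when `μ ∉ Ω₁`, since then `τ^μ = 0`. -/
noncomputable def varA (m : ι) (μ : Fin ℓ → ℕ) :
    MvPolynomial (ι × Ω₁) F :=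
  if h : μ ∈ Ω₁ then X (m, ⟨μ, h⟩) else 0

theorem isWeightedHomogeneous_varA (m : ι) (μ : Fin ℓ → ℕ) :
    (varA F Ω₁ m μ).IsWeightedHomogeneous (fun z : ι × Ω₁ => zc (z.2 : Fin ℓ → ℕ)) (zc μ) := by
  unfold varA
  split_ifs
  exacts [isWeightedHomogeneous_X F _ _, isWeightedHomogeneous_zero _ _ _]

theorem sum_varA_add_sum_outsideShift (m : ι) (ω : Fin ℓ → ℕ) :
    ∑ ν ∈ Ω₁, varA F Ω₁ m (ω + ν) + ∑ μ ∈ outsideShift Ω₁ ω, varA F Ω₁ m μ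
      = ∑ μ ∈ Ω₁, varA F Ω₁ m μ := by
  have hshift : ∑ μ ∈ Ω₁.image (ω + ·), varA F Ω₁ m μ
      = ∑ μ ∈ Ω₁ ∩ Ω₁.image (ω + ·), varA F Ω₁ m μ := by
    refine (Finset.sum_subset Finset.inter_subset_right fun μ hμ hμ' => ?_).symm
    rw [varA, dif_neg fun h => hμ' (Finset.mem_inter.2 ⟨h, hμ⟩)]
  rw [← Finset.sum_image fun _ _ _ _ h => add_left_cancel h, hshift, outsideShift,
    Finset.sum_inter_add_sum_sdiff]

theorem tauA_X (i : ι) : tauA F Ω₁ ι (X i) = ∑ μ ∈ Ω₁, varA F Ω₁ i μ := by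
  rw [tauA, aeval_X, ← Finset.sum_coe_sort Ω₁]
  simp [varA]

theorem isHomogeneous_tauA {q : MvPolynomial ι F} {n : ℕ} (hq : q.IsHomogeneous n) :
    (tauA F Ω₁ ι q).IsHomogeneous n := by
  have h := hq.aeval (fun i => ∑ ω : Ω₁, X (i, ω)) fun i =>
    IsHomogeneous.sum _ _ _ fun ω _ => isHomogeneous_X F (i, ω)
  rwa [one_mul] at h

theorem weight_mem_of_mem_support_tauA {q : MvPolynomial ι F} {n : ℕ} (hq : q.IsHomogeneous n)
    {d : ι × Ω₁ →₀ ℕ} (hd : d ∈ (tauA F Ω₁ ι q).support) :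
    Finsupp.weight (fun z : ι × Ω₁ => zc (z.2 : Fin ℓ → ℕ)) d ∈ n • zcSet Ω₁ := by
  have h := Finsupp.weight_mem_nsmul (S := zcSet Ω₁) (fun z : ι × Ω₁ => ⟨z.2, z.2.2, rfl⟩) d
  rwa [Finsupp.degree_eq_weight_one, ← Pi.one_def,
    isHomogeneous_tauA Ω₁ hq (mem_support_iff.1 hd)] at h

theorem weightedHomogeneousComponent_tauA_mul_varA_eq_zero {q : MvPolynomial ι F} {n : ℕ}
    (hq : q.IsHomogeneous n) {ω μ : Fin ℓ → ℕ} (hω : ω ∈ Ω₁) (hμ : μ ∈ outsideShift Ω₁ ω)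
    {γ : Fin ℓ → ℤ} (hγ : γ ∉ zcDiffSet Ω₁ + n • zcSet Ω₁) (m : ι) :
    weightedHomogeneousComponent (fun z : ι × Ω₁ => zc (z.2 : Fin ℓ → ℕ)) (γ + zc ω)
      (tauA F Ω₁ ι q * varA F Ω₁ m μ) = 0 := by
  rw [varA, dif_pos (Finset.mem_sdiff.1 hμ).1]
  refine weightedHomogeneousComponent_mul_X_eq_zero fun d hd hdγ => hγ ?_
  have hγ' : γ = (zc μ - zc ω) + Finsupp.weight (fun z : ι × Ω₁ => zc (z.2 : Fin ℓ → ℕ)) d := by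
    rw [← add_sub_cancel_right γ (zc ω), ← hdγ]
    abel
  rw [hγ']
  exact Set.add_mem_add (zc_sub_mem_zcDiffSet Ω₁ hω hμ) (weight_mem_of_mem_support_tauA Ω₁ hq hd)

variable {g : Type*} [LieRing g] [LieAlgebra F g] [Fintype ι] (bg : Module.Basis ι F g)

/-- The adjoint action of `x ⊗ τ^ω` on the variables of `S(g ⊗ A)`. -/
noncomputable def vAdSingle (x : g) (ω : Fin ℓ → ℕ) : ι × Ω₁ → MvPolynomial (ι × Ω₁) F :=
  fun z => ∑ m, bg.repr ⁅x, bg z.1⁆ m • varA F Ω₁ m (ω + z.2)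

theorem vAdA_eq_sum (xc : Ω₁ → g) : vAdA Ω₁ bg xc = ∑ ω : Ω₁, vAdSingle Ω₁ bg (xc ω) ω := by
  funext z
  simp only [vAdA, vAdSingle, varA, Finset.sum_apply]
  refine Finset.sum_congr rfl fun ω _ => ?_
  split_ifs <;> simp

theorem isWeightedHomogeneous_vAdSingle (x : g) (ω : Fin ℓ → ℕ) (z : ι × Ω₁) :
    (vAdSingle Ω₁ bg x ω z).IsWeightedHomogeneous (fun z : ι × Ω₁ => zc (z.2 : Fin ℓ → ℕ))
      (zc (z.2 : Fin ℓ → ℕ) + zc ω) := by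
  rw [← mem_weightedHomogeneousSubmodule, add_comm, ← zc_add]
  exact Submodule.sum_mem _ fun m _ =>
    Submodule.smul_mem _ _ (isWeightedHomogeneous_varA Ω₁ m (ω + z.2))

theorem extDer_vAdSingle_tauA_X_sub (x : g) (ω : Fin ℓ → ℕ) (j : ι) :
    extDer (vAdSingle Ω₁ bg x ω) (tauA F Ω₁ ι (X j)) - tauA F Ω₁ ι (vAd bg x j)
      = -∑ m, bg.repr ⁅x, bg j⁆ m • ∑ μ ∈ outsideShift Ω₁ ω, varA F Ω₁ m μ := by
  have hact : extDer (vAdSingle Ω₁ bg x ω) (tauA F Ω₁ ι (X j))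
      = ∑ m, bg.repr ⁅x, bg j⁆ m • ∑ ν ∈ Ω₁, varA F Ω₁ m (ω + ν) := by
    simp only [tauA, aeval_X, extDer_eq_mkDerivation, map_sum, mkDerivation_X, vAdSingle]
    rw [Finset.sum_comm]
    simp only [← Finset.smul_sum]
    exact Finset.sum_congr rfl fun m _ =>
      congrArg _ (Finset.sum_coe_sort Ω₁ fun ν => varA F Ω₁ m (ω + ν))
  rw [hact]
  simp only [vAd, map_sum, map_smul, tauA_X, ← sum_varA_add_sum_outsideShift Ω₁ _ ω,
    smul_add, Finset.sum_add_distrib]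
  abel

theorem extDer_vAdSingle_pComp_eq_zero {p : MvPolynomial ι F} {k : ℕ} (hp : p.IsHomogeneous k)
    {x : g} (hinv : extDer (vAd bg x) p = 0) {ω : Fin ℓ → ℕ} (hω : ω ∈ Ω₁) {γ : Fin ℓ → ℤ}
    (hγ : γ ∉ zcDiffSet Ω₁ + (k - 1) • zcSet Ω₁) :
    extDer (vAdSingle Ω₁ bg x ω) (pComp F Ω₁ p γ) = 0 := by
  rw [pComp, extDer_weightedHomogeneousComponent (isWeightedHomogeneous_vAdSingle Ω₁ bg x ω),
    extDer_algHom_of_extDer_eq_zero hinv]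
  simp only [extDer_vAdSingle_tauA_X_sub, mul_neg, Finset.mul_sum, mul_smul_comm, map_neg,
    map_sum, map_smul, Finset.sum_neg_distrib, neg_eq_zero]
  exact Finset.sum_eq_zero fun j _ => Finset.sum_eq_zero fun m _ => smul_eq_zero_of_right _ <|
    Finset.sum_eq_zero fun μ hμ =>
      weightedHomogeneousComponent_tauA_mul_varA_eq_zero Ω₁ hp.pderiv hω hμ hγ m

end CurrentAlgebra

theorem statement5_general {F : Type*} [Field F] {ℓ : ℕ}
    (Ω₁ : Finset (Fin ℓ → ℕ))
    {g : Type*} [LieRing g] [LieAlgebra F g]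
    {ι : Type*} [Fintype ι] (bg : Module.Basis ι F g)
    (k : ℕ) (hk : 1 ≤ k) (p : MvPolynomial ι F) (hp : p.IsHomogeneous k)
    (hinv : ∀ x : g, extDer (vAd bg x) p = 0)
    (γ : Fin ℓ → ℤ)
    (hγ : γ ∉ ⋃ j ∈ Finset.Icc 1 k, setAdd
      (nfoldSum {δ : Fin ℓ → ℤ | (∃ α ∈ Ω₁, ∃ β ∈ Ω₁, δ = zc α - zc β)
          ∧ ¬(∃ β ∈ Ω₁, δ = zc β)} j)
      (nfoldSum {δ : Fin ℓ → ℤ | ∃ β ∈ Ω₁, δ = zc β} (k - j))) :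
    (pComp F Ω₁ p γ).IsHomogeneous k
      ∧ ∀ xc : ↥Ω₁ → g, extDer (vAdA Ω₁ bg xc) (pComp F Ω₁ p γ) = 0 := by
  have hγ₁ : γ ∉ zcDiffSet Ω₁ + (k - 1) • zcSet Ω₁ := fun h => hγ <| Set.mem_iUnion₂.2
    ⟨1, Finset.mem_Icc.2 ⟨le_rfl, hk⟩, by
      rwa [nfoldSum_eq_nsmul, nfoldSum_eq_nsmul, setAdd_eq_add, one_nsmul]⟩
  refine ⟨(isHomogeneous_tauA Ω₁ hp).weightedHomogeneousComponent _ _, fun xc => ?_⟩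
  rw [vAdA_eq_sum, extDer_sum]
  exact Finset.sum_eq_zero fun ω _ => extDer_vAdSingle_pComp_eq_zero Ω₁ bg hp (hinv _) ω.2 hγ₁

/-- Suppose `p ∈ S^k(g)^g` for some `k ≥ 1`, i.e. `p` is a degree-`k`
element of `S(g)` invariant under the adjoint action of `g`.  Then
`p_γ ∈ S^k(g ⊗ A)^{g ⊗ A}` for every
`γ ∉ -Φ_k = ⋃_{j=1}^{k} (((Ω₁ - Ω₁) \ Ω₁)^j + Ω₁^{k-j})`; that is, every such component
`p_γ` is homogeneous of degree `k` and invariant under the adjoint action of `g ⊗ A` on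
`S(g ⊗ A)` (equivalently, killed by the derivation extending the adjoint action of every
element `∑_{ω ∈ Ω₁} xc ω ⊗ τ^ω` of `g ⊗ A`). -/
theorem statement5 {F : Type*} [Field F] [CharZero F] {ℓ : ℕ}
    (Ω₁ : Finset (Fin ℓ → ℕ))
    (hstab : ∀ ω γ : Fin ℓ → ℕ, ω ∉ Ω₁ → ω + γ ∉ Ω₁)
    {g : Type*} [LieRing g] [LieAlgebra F g] [FiniteDimensional F g]
    {ι : Type*} [Fintype ι] (bg : Module.Basis ι F g)
    (k : ℕ) (hk : 1 ≤ k) (p : MvPolynomial ι F) (hp : p.IsHomogeneous k)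
    (hinv : ∀ x : g, extDer (vAd bg x) p = 0)
    (γ : Fin ℓ → ℤ)
    (hγ : γ ∉ ⋃ j ∈ Finset.Icc 1 k, setAdd
      (nfoldSum {δ : Fin ℓ → ℤ | (∃ α ∈ Ω₁, ∃ β ∈ Ω₁, δ = zc α - zc β)
          ∧ ¬(∃ β ∈ Ω₁, δ = zc β)} j)
      (nfoldSum {δ : Fin ℓ → ℤ | ∃ β ∈ Ω₁, δ = zc β} (k - j))) :
    (pComp F Ω₁ p γ).IsHomogeneous k
      ∧ ∀ xc : ↥Ω₁ → g, extDer (vAdA Ω₁ bg xc) (pComp F Ω₁ p γ) = 0 :=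
  statement5_general Ω₁ bg k hk p hp hinv γ hγ
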